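/- Let v ∈ F₃ and let (Tₙ)ₙ be the associated sequence of subsets of ℤ³. Then for all n ≥ 1, Tₙ = {x ∈ ℤ³ : ⟨x,v⟩ = Σ_{i=0}^{n−1} εᵢ v₁⁽ⁱ⁾ for some ε₀,…,ε_{n−1} ∈ {0,1}}. -/

import Mathlib

open Matrix
open scoped Classical

noncomputable section

abbrev Z3 := Fin 3 → ℤ
abbrev R3 := Fin 3 → ℝ

/-- The inner product `⟨x, v⟩` of an integer vector with a real vector. -/
def dot3 (x : Z3) (v : R3) : ℝ := ∑ i, (x i : ℝ) * v i

/-- Two points of `ℤ³` are 2-adjacent if `‖x − y‖₁ = 1`. -/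
def adj3 (x y : Z3) : Prop := (∑ i, |x i - y i|) = 1

/-- A subset of `ℤ³` is 2-connected if it is nonempty and any two of its points are
joined by a finite chain of points of the set with consecutive points 2-adjacent. -/
def Connected3 (A : Set Z3) : Prop :=
  A.Nonempty ∧ ∀ x ∈ A, ∀ y ∈ A,
    Relation.ReflTransGen (fun a b => b ∈ A ∧ adj3 a b) x y

/-- The arithmetical discrete plane `P(v, ω)`. -/
def Plane (v : R3) (ω : ℝ) : Set Z3 := {x | 0 ≤ dot3 x v ∧ dot3 x v < ω}

/-- The connecting thickness `Ω(v)`. -/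
def omegaConn (v : R3) : ℝ := sInf {ω : ℝ | 0 ≤ ω ∧ Connected3 (Plane v ω)}

/-- `O₃⁺ = {v : 0 ≤ v₁ ≤ v₂ ≤ v₃}`. -/
def O3 : Set R3 := {v | 0 ≤ v 0 ∧ v 0 ≤ v 1 ∧ v 1 ≤ v 2}

/-- The ordered fully subtractive map. -/
def FS (v : R3) : R3 :=
  if v 0 ≤ v 1 - v 0 ∧ v 1 - v 0 ≤ v 2 - v 0 then ![v 0, v 1 - v 0, v 2 - v 0]
  else if v 1 - v 0 < v 0 ∧ v 0 ≤ v 2 - v 0 then ![v 1 - v 0, v 0, v 2 - v 0]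
  else ![v 1 - v 0, v 2 - v 0, v 0]

/-- `F₃ = {v ∈ O₃⁺ : v₁⁽ⁿ⁾ + v₂⁽ⁿ⁾ > v₃⁽ⁿ⁾ for all n}`. -/
def F3set : Set R3 :=
  {v | v ∈ O3 ∧ ∀ n : ℕ, (FS^[n] v) 2 < (FS^[n] v) 0 + (FS^[n] v) 1}

/-- Branch index of `F` at `v`: values `0, 1, 2` encode the branches labelled `1, 2, 3`. -/
def FSidx (v : R3) : Fin 3 :=
  if v 0 ≤ v 1 - v 0 ∧ v 1 - v 0 ≤ v 2 - v 0 then 0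
  else if v 1 - v 0 < v 0 ∧ v 0 ≤ v 2 - v 0 then 1
  else 2

/-- The matrices `M₁, M₂, M₃` of the fully subtractive algorithm. -/
def Mmat : Fin 3 → Matrix (Fin 3) (Fin 3) ℤ :=
  ![!![1,0,0; 1,1,0; 1,0,1], !![0,1,0; 1,1,0; 0,1,1], !![0,0,1; 1,0,1; 0,1,1]]

def e1 : Z3 := ![1,0,0]

/-- The product `M₁ ⋯ Mₙ` of the matrices associated with the F-expansion of `v`. -/
def prodM (v : R3) (n : ℕ) : Matrix (Fin 3) (Fin 3) ℤ :=
  ((List.range n).map (fun j => Mmat (FSidx (FS^[j] v)))).prod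

/-- The translation vector `((M₁⋯Mₙ)ᵀ)⁻¹ · e₁`. -/
def transVec (v : R3) (n : ℕ) : Z3 := ((prodM v n)ᵀ)⁻¹ *ᵥ e1

/-- The sequence `Tₙ` of subsets of `ℤ³`: `T₀ = {0}`, `T_{n+1} = Tₙ ∪ (Tₙ + ((M₁⋯Mₙ)ᵀ)⁻¹·e₁)`
(so that `T₁ = {0, e₁}`, the empty matrix product being the identity). -/
def Tseq (v : R3) : ℕ → Set Z3
  | 0 => {0}
  | n + 1 => Tseq v n ∪ ((fun x => x + transVec v n) '' Tseq v n)

/-!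
Since `⟨transVec v n, v⟩ = v₁⁽ⁿ⁾`, the map `x ↦ ⟨x, v⟩` sends `Tₙ` onto the subset sums, and the
theorem amounts to its injectivity, i.e. to the `ℤ`-linear independence of the coordinates of `v`.
If `⟨z, v⟩ = 0`, then `zₙ = (M₁⋯Mₙ)ᵀ z` satisfies `⟨zₙ, v⁽ⁿ⁾⟩ = 0`. Along the orbit the weighted norm
`Qₙ = Σ |zₙᵢ| v⁽ⁿ⁾ᵢ` drops by `cₙ v₁⁽ⁿ⁾`, where `cₙ = ‖zₙ‖₁ - |Σ zₙᵢ|`, while the coordinate sum `σₙ`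
drops by `2 v₁⁽ⁿ⁾` and tends to `0`. For `z ≠ 0` the condition `v₃⁽ⁿ⁾ < v₁⁽ⁿ⁾ + v₂⁽ⁿ⁾` gives
`2 Qₙ < cₙ σₙ`, which fails at an index where `cₙ` is minimal.
-/

open Filter Topology Function

lemma FS_cases (u : R3) (h12 : u 1 ≤ u 2) :
    (u 0 ≤ u 1 - u 0 ∧ FS u = ![u 0, u 1 - u 0, u 2 - u 0] ∧ FSidx u = 0) ∨
    (u 1 - u 0 < u 0 ∧ u 0 ≤ u 2 - u 0 ∧ FS u = ![u 1 - u 0, u 0, u 2 - u 0] ∧ FSidx u = 1) ∨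
    (u 1 - u 0 < u 0 ∧ u 2 - u 0 < u 0 ∧ FS u = ![u 1 - u 0, u 2 - u 0, u 0] ∧ FSidx u = 2) := by
  unfold FS FSidx
  by_cases h1 : u 0 ≤ u 1 - u 0
  · left
    simp [h1, show u 1 - u 0 ≤ u 2 - u 0 by linarith]
  by_cases h2 : u 0 ≤ u 2 - u 0
  · right; left
    simp [h1, h2, not_le.mp h1]
  · right; right
    simp [h1, h2, not_le.mp h1, not_le.mp h2]

lemma FS_mem_O3 {u : R3} (hu : u ∈ O3) : FS u ∈ O3 := by
  obtain ⟨h0, h01, h12⟩ := hu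
  rcases FS_cases u h12 with ⟨h, hF, -⟩ | ⟨h1, h2, hF, -⟩ | ⟨h1, h2, hF, -⟩ <;>
    · rw [hF]
      refine ⟨?_, ?_, ?_⟩ <;> simp <;> linarith

lemma sum_FS {u : R3} (h12 : u 1 ≤ u 2) : ∑ i, FS u i = ∑ i, u i - 2 * u 0 := by
  rcases FS_cases u h12 with ⟨-, hF, -⟩ | ⟨-, -, hF, -⟩ | ⟨-, -, hF, -⟩ <;>
    · simp only [hF, Fin.sum_univ_three, Matrix.cons_val_zero, Matrix.cons_val_one, Matrix.cons_val]
      ring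

lemma FS_zero_of_two_mul_le {u : R3} (h12 : u 1 ≤ u 2) (h : 2 * u 0 ≤ u 1) : FS u 0 = u 0 := by
  rcases FS_cases u h12 with ⟨-, hF, -⟩ | ⟨h1, -, -, -⟩ | ⟨h1, -, -, -⟩
  · simp [hF]
  all_goals linarith

lemma Mmat_mulVec_FS {u : R3} (h12 : u 1 ≤ u 2) :
    (Mmat (FSidx u)).map (Int.cast : ℤ → ℝ) *ᵥ FS u = u := by
  ext i
  rcases FS_cases u h12 with ⟨-, hF, hi⟩ | ⟨-, -, hF, hi⟩ | ⟨-, -, hF, hi⟩ <;>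
    · rw [hF, hi]
      fin_cases i <;> simp [Mmat, Matrix.mulVec, dotProduct, Fin.sum_univ_three]

lemma isUnit_det_Mmat (i : Fin 3) : IsUnit (Mmat i).det := by
  rw [Int.isUnit_iff]
  fin_cases i <;> simp [Mmat, Matrix.det_fin_three]

def dot3AddHom (v : R3) : Z3 →+ ℝ where
  toFun x := dot3 x v
  map_zero' := by simp [dot3]
  map_add' x y := by simp [dot3, add_mul, Finset.sum_add_distrib]

lemma dot3AddHom_apply (v : R3) (x : Z3) : dot3AddHom v x = dot3 x v := rfl

lemma dot3_map_mulVec (A : Matrix (Fin 3) (Fin 3) ℤ) (x : Z3) (u : R3) :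
    dot3 x (A.map (Int.cast : ℤ → ℝ) *ᵥ u) = dot3 (Aᵀ *ᵥ x) u := by
  simp only [dot3, Matrix.mulVec, dotProduct, Matrix.map_apply, Fin.sum_univ_three,
    Matrix.transpose_apply, Int.cast_add, Int.cast_mul]
  ring

lemma prodM_succ (v : R3) (n : ℕ) :
    prodM v (n + 1) = prodM v n * Mmat (FSidx (FS^[n] v)) := by
  simp [prodM, List.range_succ]

lemma isUnit_transpose_prodM (v : R3) (n : ℕ) : IsUnit (prodM v n)ᵀ := by
  rw [Matrix.isUnit_iff_isUnit_det, Matrix.det_transpose]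
  induction n with
  | zero => simp [prodM]
  | succ n ih => rw [prodM_succ, Matrix.det_mul]; exact ih.mul (isUnit_det_Mmat _)

lemma sum_abs_mul_le_of_sum_mul_eq_zero {ι : Type*} [Fintype ι] {z u : ι → ℝ} {M : ℝ}
    (hu : ∀ i, u i ≤ M) (hzu : ∑ i, z i * u i = 0) :
    ∑ i, |z i| * u i ≤ (∑ i, |z i| - |∑ i, z i|) * M := by
  have key : |∑ i, z i| * M ≤ ∑ i, |z i| * (M - u i) :=
    calc |∑ i, z i| * M ≤ |(∑ i, z i) * M| := by
          rw [abs_mul]; exact mul_le_mul_of_nonneg_left (le_abs_self M) (abs_nonneg _)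
      _ = |∑ i, z i * (M - u i)| := by
          simp only [mul_sub, Finset.sum_sub_distrib, hzu, sub_zero, Finset.sum_mul]
      _ ≤ ∑ i, |z i * (M - u i)| := Finset.abs_sum_le_sum_abs _ _
      _ = ∑ i, |z i| * (M - u i) := by
          simp only [abs_mul, abs_of_nonneg (sub_nonneg.2 (hu _))]
  simp only [mul_sub, Finset.sum_sub_distrib, ← Finset.sum_mul] at key
  linarith

def weightedNorm (z : Z3) (u : R3) : ℝ := ∑ i, |(z i : ℝ)| * u i

def cancellation (z : Z3) : ℤ := ∑ i, |z i| - |∑ i, z i|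

lemma cancellation_nonneg (z : Z3) : 0 ≤ cancellation z :=
  sub_nonneg.2 (Finset.abs_sum_le_sum_abs _ _)

lemma weightedNorm_nonneg {u : R3} (hu : u ∈ O3) (z : Z3) : 0 ≤ weightedNorm z u := by
  obtain ⟨h0, h01, h12⟩ := hu
  refine Finset.sum_nonneg fun i _ => mul_nonneg (abs_nonneg _) ?_
  fin_cases i <;> simp <;> linarith

lemma weightedNorm_FS {u : R3} (h12 : u 1 ≤ u 2) (z : Z3) :
    weightedNorm ((Mmat (FSidx u))ᵀ *ᵥ z) (FS u) = weightedNorm z u - cancellation z * u 0 := by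
  rcases FS_cases u h12 with ⟨-, hF, hi⟩ | ⟨-, -, hF, hi⟩ | ⟨-, -, hF, hi⟩ <;>
    · rw [hF, hi]
      simp only [weightedNorm, cancellation, Mmat, Matrix.mulVec, dotProduct, Fin.sum_univ_three,
        Matrix.transpose_apply, Matrix.of_apply, Matrix.cons_val', Matrix.cons_val_fin_one,
        Matrix.cons_val_zero, Matrix.cons_val_one, Matrix.cons_val, Int.cast_add, Int.cast_mul,
        Int.cast_sub, Int.cast_abs, Int.cast_zero, Int.cast_one, zero_mul, one_mul, zero_add, add_zero]
      ring

lemma two_mul_weightedNorm_lt {u : R3} (h0 : 0 < u 0) (h01 : u 0 ≤ u 1) (h12 : u 1 ≤ u 2)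
    (h2 : u 2 < u 0 + u 1) {z : Z3} (hz : z ≠ 0) (hzu : dot3 z u = 0) :
    2 * weightedNorm z u < cancellation z * ∑ i, u i := by
  have hu_pos : ∀ i, 0 < u i := fun i => by fin_cases i <;> simp <;> linarith
  have hle : weightedNorm z u ≤ cancellation z * u 2 := by
    have := sum_abs_mul_le_of_sum_mul_eq_zero (z := fun i => (z i : ℝ)) (M := u 2)
      (fun i => by fin_cases i <;> simp <;> linarith) hzu
    simpa [weightedNorm, cancellation, mul_comm] using this
  have hpos : 0 < weightedNorm z u := by
    obtain ⟨i, hi⟩ := Function.ne_iff.mp hz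
    exact Finset.sum_pos' (fun j _ => mul_nonneg (abs_nonneg _) (hu_pos j).le)
      ⟨i, Finset.mem_univ _, mul_pos (abs_pos.2 (Int.cast_ne_zero.2 hi)) (hu_pos i)⟩
  have hc : 0 < (cancellation z : ℝ) := pos_of_mul_pos_left (hpos.trans_le hle) (hu_pos 2).le
  calc 2 * weightedNorm z u ≤ cancellation z * (2 * u 2) := by linarith
    _ < cancellation z * ∑ i, u i := by
        refine mul_lt_mul_of_pos_left ?_ hc
        rw [Fin.sum_univ_three]; linarith

/-- At an index where `c` is minimal, `2 Q - c σ` is nonincreasing from then on,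
and its tail is at least `-c σ → 0`. -/
lemma exists_mul_le_two_mul_of_descent {Q σ a : ℕ → ℝ} {c : ℕ → ℤ} (hQ : ∀ n, 0 ≤ Q n)
    (ha : ∀ n, 0 ≤ a n) (hc : ∀ n, 0 ≤ c n) (hσ : Tendsto σ atTop (𝓝 0))
    (hQ_succ : ∀ n, Q (n + 1) = Q n - c n * a n) (hσ_succ : ∀ n, σ (n + 1) = σ n - 2 * a n) :
    ∃ n, c n * σ n ≤ 2 * Q n := by
  obtain ⟨_, ⟨n, rfl⟩, hmin⟩ :=
    Int.exists_least_of_bdd (P := (· ∈ Set.range c)) ⟨0, by rintro _ ⟨m, rfl⟩; exact hc m⟩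
      ⟨c 0, 0, rfl⟩
  refine ⟨n, ?_⟩
  have hdesc : ∀ j, 2 * Q (n + j) - c n * σ (n + j) ≤ 2 * Q n - c n * σ n := by
    intro j
    induction j with
    | zero => rfl
    | succ j ih =>
      rw [← add_assoc, hQ_succ, hσ_succ]
      have := mul_le_mul_of_nonneg_right (Int.cast_le.2 (hmin _ ⟨n + j, rfl⟩)) (ha (n + j))
      linarith
  have hlim : Tendsto (fun j => -(c n * σ (n + j))) atTop (𝓝 0) := by
    simpa [add_comm] using (((tendsto_add_atTop_iff_nat n).mpr hσ).const_mul (c n : ℝ)).neg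
  have := le_of_tendsto' (b := 2 * Q n - c n * σ n) hlim fun j => by
    linarith [hdesc j, hQ (n + j)]
  linarith

lemma Tseq_eq_setOf_sum (v : R3) (n : ℕ) :
    Tseq v n = {x | ∃ ε : Fin n → ℤ, (∀ i, ε i = 0 ∨ ε i = 1) ∧ x = ∑ i, ε i • transVec v i} := by
  induction n with
  | zero => ext x; simp [Tseq]
  | succ n ih =>
    ext x
    simp only [Tseq, ih, Set.mem_union, Set.mem_image, Set.mem_ofPred_eq]
    constructor
    · rintro (⟨ε, hε, rfl⟩ | ⟨_, ⟨ε, hε, rfl⟩, rfl⟩)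
      · exact ⟨Fin.snoc ε 0, Fin.lastCases (by simp) (by simpa), by simp [Fin.sum_univ_castSucc]⟩
      · exact ⟨Fin.snoc ε 1, Fin.lastCases (by simp) (by simpa), by simp [Fin.sum_univ_castSucc]⟩
    · rintro ⟨ε, hε, rfl⟩
      rw [Fin.sum_univ_castSucc]
      rcases hε (Fin.last n) with h | h
      · exact Or.inl ⟨fun i => ε i.castSucc, fun i => hε _, by simp [h]⟩
      · exact Or.inr ⟨_, ⟨fun i => ε i.castSucc, fun i => hε _, rfl⟩, by simp [h]⟩

section Orbit

variable {v : R3}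

lemma iterate_FS_mem_O3 (hv : v ∈ O3) (n : ℕ) : FS^[n] v ∈ O3 := by
  induction n with
  | zero => exact hv
  | succ n ih => rw [iterate_succ_apply']; exact FS_mem_O3 ih

lemma iterate_FS_bounds (hv : v ∈ F3set) (n : ℕ) :
    0 < (FS^[n] v) 0 ∧ (FS^[n] v) 0 ≤ (FS^[n] v) 1 ∧ (FS^[n] v) 1 ≤ (FS^[n] v) 2 ∧
      (FS^[n] v) 2 < (FS^[n] v) 0 + (FS^[n] v) 1 := by
  obtain ⟨h0, h01, h12⟩ := iterate_FS_mem_O3 hv.1 n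
  have h2 := hv.2 n
  exact ⟨by linarith, h01, h12, h2⟩

lemma sum_iterate_FS_succ (hv : v ∈ F3set) (n : ℕ) :
    ∑ i, (FS^[n + 1] v) i = ∑ i, (FS^[n] v) i - 2 * (FS^[n] v) 0 := by
  rw [iterate_succ_apply', sum_FS (iterate_FS_bounds hv n).2.2.1]

/-- The coordinate sum drops by `2 v₁⁽ⁿ⁾` at each step, so `v₁⁽ⁿ⁾ → 0`; if the sum stayed above
some `L > 0`, the first branch would eventually apply forever and freeze `v₁⁽ⁿ⁾ > 0`. -/
theorem tendsto_sum_iterate_FS (hv : v ∈ F3set) :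
    Tendsto (fun n => ∑ i, (FS^[n] v) i) atTop (𝓝 0) := by
  set σ : ℕ → ℝ := fun n => ∑ i, (FS^[n] v) i with hσ
  have hσ_nonneg : ∀ n, 0 ≤ σ n := fun n => by
    obtain ⟨h0, h01, h12, -⟩ := iterate_FS_bounds hv n
    simp only [hσ, Fin.sum_univ_three]
    linarith
  have hanti : Antitone σ := antitone_nat_of_succ_le fun n => by
    simp only [hσ, sum_iterate_FS_succ hv]
    linarith [(iterate_FS_bounds hv n).1]
  have hbdd : BddBelow (Set.range σ) := ⟨0, by rintro _ ⟨n, rfl⟩; exact hσ_nonneg n⟩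
  have hlim := tendsto_atTop_ciInf hanti hbdd
  set L := ⨅ n, σ n
  have hfirst : Tendsto (fun n => (FS^[n] v) 0) atTop (𝓝 0) := by
    have hdiff := hlim.sub ((tendsto_add_atTop_iff_nat 1).mpr hlim)
    rw [sub_self] at hdiff
    convert hdiff.div_const 2 using 1
    · ext n
      simp only [hσ, sum_iterate_FS_succ hv]
      ring
    · simp
  suffices hL : L = 0 by rwa [hL] at hlim
  by_contra hL
  have hL_pos : 0 < L := (le_ciInf hσ_nonneg).lt_of_ne' hL
  obtain ⟨N, hN⟩ := eventually_atTop.mp (hfirst.eventually (gt_mem_nhds (by positivity : 0 < L / 6)))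
  have hconst : ∀ n ≥ N, (FS^[n] v) 0 = (FS^[N] v) 0 := by
    refine Nat.le_induction rfl fun n hn ih => ?_
    obtain ⟨-, -, h12, h2⟩ := iterate_FS_bounds hv n
    have hLσ : L ≤ σ n := ciInf_le hbdd n
    simp only [hσ, Fin.sum_univ_three] at hLσ
    have := hN n hn
    rw [iterate_succ_apply', FS_zero_of_two_mul_le h12 (by linarith), ih]
  exact (iterate_FS_bounds hv N).1.ne'
    (tendsto_nhds_unique (tendsto_atTop_of_eventually_const hconst) hfirst)

lemma prodM_map_mulVec_iterate (hv : v ∈ F3set) (n : ℕ) :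
    (prodM v n).map (Int.cast : ℤ → ℝ) *ᵥ FS^[n] v = v := by
  induction n with
  | zero => simp [prodM]
  | succ n ih =>
    rw [prodM_succ, Matrix.map_mul_intCast, ← Matrix.mulVec_mulVec, iterate_succ_apply',
      Mmat_mulVec_FS (iterate_FS_bounds hv n).2.2.1, ih]

lemma dot3_eq_dot3_iterate (hv : v ∈ F3set) (x : Z3) (n : ℕ) :
    dot3 x v = dot3 ((prodM v n)ᵀ *ᵥ x) (FS^[n] v) := by
  conv_lhs => rw [← prodM_map_mulVec_iterate hv n]
  exact dot3_map_mulVec _ _ _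

lemma dot3_transVec (hv : v ∈ F3set) (n : ℕ) : dot3 (transVec v n) v = (FS^[n] v) 0 := by
  rw [dot3_eq_dot3_iterate hv _ n, transVec, Matrix.mulVec_mulVec,
    Matrix.mul_nonsing_inv _ ((Matrix.isUnit_iff_isUnit_det _).1 (isUnit_transpose_prodM v n)),
    Matrix.one_mulVec]
  simp [dot3, e1, Fin.sum_univ_three]

theorem eq_zero_of_dot3_eq_zero (hv : v ∈ F3set) {z : Z3} (hz : dot3 z v = 0) : z = 0 := by
  by_contra hz0
  set w : ℕ → Z3 := fun n => (prodM v n)ᵀ *ᵥ z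
  have hw_succ : ∀ n, w (n + 1) = (Mmat (FSidx (FS^[n] v)))ᵀ *ᵥ w n := fun n => by
    simp only [w, prodM_succ, Matrix.transpose_mul, Matrix.mulVec_mulVec]
  have hw_ne : ∀ n, w n ≠ 0 := fun n hn =>
    hz0 (Matrix.mulVec_injective_of_isUnit (isUnit_transpose_prodM v n) (hn.trans (by simp)))
  obtain ⟨n, hn⟩ := exists_mul_le_two_mul_of_descent
    (Q := fun n => weightedNorm (w n) (FS^[n] v)) (c := fun n => cancellation (w n))
    (fun n => weightedNorm_nonneg (iterate_FS_mem_O3 hv.1 n) _)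
    (fun n => (iterate_FS_bounds hv n).1.le) (fun n => cancellation_nonneg _)
    (tendsto_sum_iterate_FS hv)
    (fun n => by
      simp only [hw_succ, iterate_succ_apply', weightedNorm_FS (iterate_FS_bounds hv n).2.2.1])
    (sum_iterate_FS_succ hv)
  obtain ⟨h0, h01, h12, h2⟩ := iterate_FS_bounds hv n
  exact (two_mul_weightedNorm_lt h0 h01 h12 h2 (hw_ne n)
    ((dot3_eq_dot3_iterate hv z n).symm.trans hz)).not_ge hn

end Orbit

theorem Tseq_eq_subset_sums_general (v : R3) (hv : v ∈ F3set) (n : ℕ) :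
    Tseq v n = {x : Z3 | ∃ ε : Fin n → ℤ, (∀ i, ε i = 0 ∨ ε i = 1) ∧
      dot3 x v = ∑ i : Fin n, (ε i : ℝ) * (FS^[(i : ℕ)] v) 0} := by
  have hinj : Injective (dot3AddHom v) :=
    (injective_iff_map_eq_zero _).2 fun _ => eq_zero_of_dot3_eq_zero hv
  rw [Tseq_eq_setOf_sum]
  ext x
  refine exists_congr fun ε => and_congr_right fun _ => ?_
  simp only [← hinj.eq_iff, map_sum, map_zsmul]
  simp only [dot3AddHom_apply, dot3_transVec hv, zsmul_eq_mul]

/-- For `v ∈ F₃` and `n ≥ 1`,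
`Tₙ = {x ∈ ℤ³ : ⟨x,v⟩ = Σ_{i<n} εᵢ v₁⁽ⁱ⁾, εᵢ ∈ {0,1}}`. -/
theorem Tseq_eq_subset_sums (v : R3) (hv : v ∈ F3set) (n : ℕ) (hn : 1 ≤ n) :
    Tseq v n = {x : Z3 | ∃ ε : Fin n → ℤ, (∀ i, ε i = 0 ∨ ε i = 1) ∧
      dot3 x v = ∑ i : Fin n, (ε i : ℝ) * (FS^[(i : ℕ)] v) 0} :=
  Tseq_eq_subset_sums_general v hv n

end
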